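/- Let K be a field of characteristic 2 and R = K[[x,y]] with maximal ideal m. The power series f = x² + y³ is contact 4-determined: for every g ∈ R with g − f ∈ m⁵ there exist a unit u ∈ R and a K-algebra automorphism φ of R such that g = u·φ(f). Moreover, the contact tangent image satisfies ⟨f⟩ + m·⟨∂f/∂x, ∂f/∂y⟩ = ⟨x², xy², y³⟩ as ideals of R. -/

import Mathlib

/-
Write `x = X 0`, `y = X 1`, `f = x² + y³` and `m = (x, y)`. Since `m³ ⊆ x² m + y² m`, a residual
`g - (1 + c) (x² + (y + b)³)` of order `n + 5` can be written `x² B + y² C` with `B, C` of order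
`n + 3`; in characteristic two, where `3 = 1`, replacing `c` by `c + B` and `b` by `b + C - y B`
pushes the residual to order `n + 6`. The `m`-adic limits give `g = (1 + c) (x² + (y + b)³)` with
`b ∈ m²`. The substitution `x ↦ x, y ↦ y + b` is the identity modulo `m²`, hence moves every element
of `m^n` only by an element of `m^(n+1)`, and such a map of a complete ring is bijective by
successive approximation.

For the tangent image, `∂f/∂x = 2x = 0` and `∂f/∂y = 3y² = y²`, so it is
`(x² + y³) + m y² = (x² + y³, x y², y³) = (x², x y², y³)`.
-/

open MvPowerSeries IsLocalRing

noncomputable section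

/-- The formal partial derivative ∂f/∂x_ν of a formal power series. -/
def pderiv {K : Type*} [Field K] {s : ℕ} (ν : Fin s) (f : MvPowerSeries (Fin s) K) :
    MvPowerSeries (Fin s) K :=
  fun e => ((e ν + 1 : ℕ) : K) * MvPowerSeries.coeff (e + Finsupp.single ν 1) f

section AdicComplete

variable {A : Type*} [CommRing A] {I : Ideal A}

theorem mul_mem_pow_add {a b : A} {i j : ℕ} (ha : a ∈ I ^ i) (hb : b ∈ I ^ j) :
    a * b ∈ I ^ (i + j) :=
  pow_add I i j ▸ Ideal.mul_mem_mul ha hb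

theorem eq_zero_of_forall_mem_pow [IsHausdorff I A] {a : A} (h : ∀ n, a ∈ I ^ n) : a = 0 :=
  IsHausdorff.haus ‹_› a fun n => by simpa [SModEq.zero] using h n

theorem exists_forall_sub_mem_pow [IsPrecomplete I A] {s : ℕ → A}
    (hs : ∀ n, s (n + 1) - s n ∈ I ^ n) : ∃ L, ∀ n, L - s n ∈ I ^ n := by
  have cauchy : ∀ {m n}, m ≤ n → s n - s m ∈ I ^ m := by
    intro m n hmn
    induction n, hmn using Nat.le_induction with
    | base => simp
    | succ n hmn ih => simpa using add_mem (Ideal.pow_le_pow_right hmn (hs n)) ih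
  obtain ⟨L, hL⟩ := IsPrecomplete.prec ‹_› (f := s) fun hmn => by
    rw [SModEq.sub_mem, smul_eq_mul, Ideal.mul_top, ← neg_sub]
    exact neg_mem (cauchy hmn)
  refine ⟨L, fun n => ?_⟩
  have := hL n
  rw [SModEq.sub_mem, smul_eq_mul, Ideal.mul_top, ← neg_sub] at this
  simpa using neg_mem this

theorem sub_mem_pow_succ_of_span {S : Set A} (hI : I = Ideal.span S) (φ : A →+* A)
    (h₀ : ∀ a, φ a - a ∈ I) (hS : ∀ s ∈ S, φ s - s ∈ I ^ 2) :
    ∀ n, ∀ a ∈ I ^ n, φ a - a ∈ I ^ (n + 1) := by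
  have map_mem : ∀ a ∈ I, φ a ∈ I := fun a ha => by simpa using add_mem (h₀ a) ha
  have h₁ : ∀ a ∈ I, φ a - a ∈ I ^ 2 := by
    intro a ha
    rw [hI] at ha
    induction ha using Submodule.span_induction with
    | mem s hs => exact hS s hs
    | zero => simp
    | add a b _ _ ha hb => simpa [add_sub_add_comm] using add_mem ha hb
    | smul r a ha ih =>
      rw [smul_eq_mul, map_mul, show φ r * φ a - r * a = (φ r - r) * φ a + r * (φ a - a) by ring,
        pow_two]
      exact add_mem (Ideal.mul_mem_mul (h₀ r) (map_mem a (hI ▸ ha)))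
        (Ideal.mul_mem_left _ r (pow_two I ▸ ih))
  intro n
  induction n with
  | zero => simpa using h₀
  | succ n ih =>
    intro a ha
    rw [pow_succ] at ha
    refine Submodule.mul_induction_on ha (fun u hu v hv => ?_) (fun u v hu hv => ?_)
    · rw [map_mul, show φ u * φ v - u * v = (φ u - u) * φ v + u * (φ v - v) by ring]
      exact add_mem (pow_succ I (n + 1) ▸ Ideal.mul_mem_mul (ih u hu) (map_mem v hv))
        (mul_mem_pow_add (j := 2) hu (h₁ v hv))
    · simpa [add_sub_add_comm] using add_mem hu hv

theorem bijective_of_sub_mem_pow_succ [IsAdicComplete I A] (φ : A →+ A)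
    (hφ : ∀ n, ∀ a ∈ I ^ n, φ a - a ∈ I ^ (n + 1)) : Function.Bijective φ := by
  have map_mem : ∀ {n a}, a ∈ I ^ n → φ a ∈ I ^ n := fun {n a} ha => by
    simpa using add_mem (Ideal.pow_le_pow_right n.le_succ (hφ n a ha)) ha
  refine ⟨(injective_iff_map_eq_zero φ).mpr fun a ha => ?_, fun g => ?_⟩
  · refine eq_zero_of_forall_mem_pow (I := I) fun n => ?_
    induction n with
    | zero => simp
    | succ n ih => simpa [ha] using neg_mem (hφ n a ih)
  · let s (n : ℕ) : A := Nat.rec 0 (fun _ t => t + (g - φ t)) n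
    have hres : ∀ n, g - φ (s n) ∈ I ^ n := by
      intro n
      induction n with
      | zero => simp
      | succ n ih =>
        have : g - φ (s (n + 1)) = -(φ (g - φ (s n)) - (g - φ (s n))) := by
          simp only [s, map_add]; ring
        rw [this]
        exact neg_mem (hφ n _ ih)
    obtain ⟨L, hL⟩ := exists_forall_sub_mem_pow (I := I) (s := s) fun n => by
      simpa [s] using hres n
    refine ⟨L, (sub_eq_zero.mp (eq_zero_of_forall_mem_pow (I := I) fun n => ?_)).symm⟩
    rw [show g - φ L = (g - φ (s n)) - φ (L - s n) by rw [map_sub]; ring]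
    exact sub_mem (hres n) (map_mem (hL n))

end AdicComplete

section SqAddCube

variable {A : Type*} [CommRing A] {I : Ideal A} {x y : A}

theorem pow_three_le_span_sq_mul (hI : I = Ideal.span {x, y}) :
    I ^ 3 ≤ Ideal.span {x ^ 2, y ^ 2} * I := by
  subst hI
  rw [pow_three, Ideal.span_mul_span', Ideal.span_mul_span', Ideal.span_mul_span', Ideal.span_le]
  rintro _ ⟨a, ha, _, ⟨b, hb, c, hc, rfl⟩, rfl⟩
  simp only [Set.mem_insert_iff, Set.mem_singleton_iff] at ha hb hc
  apply Ideal.subset_span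
  rcases ha with ha | ha <;> rcases hb with hb | hb <;> rcases hc with hc | hc <;> subst a b c <;>
  first
    | (refine ⟨x ^ 2, by simp, x, by simp, ?_⟩; ring1)
    | (refine ⟨x ^ 2, by simp, y, by simp, ?_⟩; ring1)
    | (refine ⟨y ^ 2, by simp, x, by simp, ?_⟩; ring1)
    | (refine ⟨y ^ 2, by simp, y, by simp, ?_⟩; ring1)

theorem exists_eq_sq_mul_add_sq_mul (hI : I = Ideal.span {x, y}) {k : ℕ} {ρ : A}
    (hρ : ρ ∈ I ^ (k + 3)) : ∃ B ∈ I ^ (k + 1), ∃ C ∈ I ^ (k + 1), ρ = x ^ 2 * B + y ^ 2 * C := by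
  have hle : I ^ (k + 3) ≤ Ideal.span {x ^ 2, y ^ 2} * I ^ (k + 1) := by
    calc I ^ (k + 3) = I ^ 3 * I ^ k := by rw [pow_add, mul_comm]
      _ ≤ Ideal.span {x ^ 2, y ^ 2} * I * I ^ k :=
        Ideal.mul_mono_left (pow_three_le_span_sq_mul hI)
      _ = Ideal.span {x ^ 2, y ^ 2} * I ^ (k + 1) := by rw [mul_assoc, ← pow_succ']
  rw [Ideal.span_insert, Ideal.sup_mul] at hle
  obtain ⟨u, hu, v, hv, rfl⟩ := Submodule.mem_sup.mp (hle hρ)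
  obtain ⟨B, hB, rfl⟩ := Ideal.mem_span_singleton_mul.mp hu
  obtain ⟨C, hC, rfl⟩ := Ideal.mem_span_singleton_mul.mp hv
  exact ⟨B, hB, C, hC, rfl⟩

theorem exists_refine_sq_add_cube_approx (hI : I = Ideal.span {x, y}) (h2 : (2 : A) = 0)
    {g b c : A} {n : ℕ} (hb : b ∈ I ^ 2) (hc : c ∈ I)
    (hρ : g - (1 + c) * (x ^ 2 + (y + b) ^ 3) ∈ I ^ (n + 5)) :
    ∃ β ∈ I ^ (n + 3), ∃ γ ∈ I ^ (n + 3),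
      g - (1 + (c + γ)) * (x ^ 2 + (y + (b + β)) ^ 3) ∈ I ^ (n + 6) := by
  obtain ⟨γ, hγ, C, hC, hsplit⟩ := exists_eq_sq_mul_add_sq_mul hI (k := n + 2) hρ
  have hy : y ∈ I := hI ▸ Ideal.subset_span (by simp)
  have hyb : y + b ∈ I := add_mem hy (Ideal.pow_le_self two_ne_zero hb)
  obtain ⟨β, rfl⟩ : ∃ β, C = β + y * γ := ⟨C - y * γ, by ring⟩
  have hβ : β ∈ I ^ (n + 3) := by simpa using sub_mem hC (Ideal.mul_mem_left _ y hγ)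
  refine ⟨β, hβ, γ, hγ, ?_⟩
  -- since `3 = 1`, the term `3 (y + b)² β` of the expansion cancels `y² β` up to higher order
  have key : g - (1 + (c + γ)) * (x ^ 2 + (y + (b + β)) ^ 3) =
      γ * (y ^ 3 - (y + b) ^ 3) - β * (b * b + (c + γ) * (y + b) ^ 2)
        - β ^ 2 * ((1 + c + γ) * (y + b + β)) := by
    linear_combination hsplit - (β * (y ^ 2 + 3 * y * b + b ^ 2 + (c + γ) * (y + b) ^ 2)
      + (1 + c + γ) * β ^ 2 * (y + b)) * h2
  have hcγ : c + γ ∈ I ^ 1 := by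
    rw [pow_one]; exact add_mem hc (Ideal.pow_le_self (by omega) hγ)
  rw [key]
  refine sub_mem (sub_mem ?_ ?_) ?_
  · have := mul_mem_pow_add hγ (sub_mem (Ideal.pow_mem_pow hy 3) (Ideal.pow_mem_pow hyb 3))
    exact Ideal.pow_le_pow_right (by omega) this
  · have := mul_mem_pow_add hβ (add_mem (Ideal.pow_le_pow_right (by omega) (mul_mem_pow_add hb hb))
      (mul_mem_pow_add hcγ (Ideal.pow_mem_pow hyb 2)))
    exact Ideal.pow_le_pow_right (by omega) this
  · have := Ideal.mul_mem_right ((1 + c + γ) * (y + b + β)) _ (Ideal.pow_mem_pow hβ 2)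
    rw [← pow_mul] at this
    exact Ideal.pow_le_pow_right (by omega) this

theorem exists_eq_unit_mul_sq_add_cube [IsAdicComplete I A] (hI : I = Ideal.span {x, y})
    (h2 : (2 : A) = 0) {g : A} (hg : g - (x ^ 2 + y ^ 3) ∈ I ^ 5) :
    ∃ b ∈ I ^ 2, ∃ u : Aˣ, g = u * (x ^ 2 + (y + b) ^ 3) := by
  let Approx (n : ℕ) (p : A × A) : Prop :=
    p.1 ∈ I ^ 2 ∧ p.2 ∈ I ∧ g - (1 + p.2) * (x ^ 2 + (y + p.1) ^ 3) ∈ I ^ (n + 5)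
  have step : ∀ n p, Approx n p →
      ∃ q, Approx (n + 1) q ∧ q.1 - p.1 ∈ I ^ n ∧ q.2 - p.2 ∈ I ^ n := by
    rintro n ⟨b, c⟩ ⟨hb, hc, hρ⟩
    obtain ⟨β, hβ, γ, hγ, hρ'⟩ := exists_refine_sq_add_cube_approx hI h2 hb hc hρ
    have hβ' : β ∈ I ^ n := Ideal.pow_le_pow_right (by omega) hβ
    have hγ' : γ ∈ I ^ n := Ideal.pow_le_pow_right (by omega) hγ
    refine ⟨(b + β, c + γ), ⟨add_mem hb (Ideal.pow_le_pow_right (by omega) hβ),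
      add_mem hc (Ideal.pow_le_self (by omega) hγ), hρ'⟩, by simpa using hβ', by simpa using hγ'⟩
  choose next hnext using step
  let s (n : ℕ) : {p // Approx n p} :=
    Nat.rec ⟨(0, 0), by simpa [Approx] using hg⟩
      (fun n p => ⟨next n p.1 p.2, (hnext n p.1 p.2).1⟩) n
  obtain ⟨b, hb⟩ := exists_forall_sub_mem_pow (I := I) (s := fun n => (s n).1.1)
    fun n => (hnext n _ (s n).2).2.1
  obtain ⟨c, hc⟩ := exists_forall_sub_mem_pow (I := I) (s := fun n => (s n).1.2)
    fun n => (hnext n _ (s n).2).2.2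
  have hb₂ : b ∈ I ^ 2 := by simpa using add_mem (s 2).2.1 (hb 2)
  have hc₁ : c ∈ I := by simpa using add_mem (s 1).2.2.1 (pow_one I ▸ hc 1 : c - (s 1).1.2 ∈ I)
  have hres : g - (1 + c) * (x ^ 2 + (y + b) ^ 3) = 0 := by
    refine eq_zero_of_forall_mem_pow (I := I) fun n => ?_
    have hbn := Ideal.Quotient.eq.mpr (hb n)
    have hcn := Ideal.Quotient.eq.mpr (hc n)
    have hmk : Ideal.Quotient.mk (I ^ n) (g - (1 + c) * (x ^ 2 + (y + b) ^ 3)) =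
        Ideal.Quotient.mk (I ^ n) (g - (1 + (s n).1.2) * (x ^ 2 + (y + (s n).1.1) ^ 3)) := by
      simp only [map_sub, map_mul, map_add, map_pow, hbn, hcn]
    simpa using
      add_mem (Ideal.Quotient.eq.mp hmk) (Ideal.pow_le_pow_right (by omega) (s n).2.2.2)
  have hunit : IsUnit (1 + c) := by
    simpa [add_comm] using Ideal.mem_jacobson_bot.mp (IsAdicComplete.le_jacobson_bot I hc₁) 1
  exact ⟨b, hb₂, hunit.unit, by simpa [sub_eq_zero] using hres⟩

end SqAddCube

namespace MvPowerSeries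

instance charP {σ R : Type*} [CommSemiring R] (p : ℕ) [CharP R p] :
    CharP (MvPowerSeries σ R) p :=
  charP_of_injective_algebraMap (R := R) C_injective p

theorem mem_maximalIdeal_iff_constantCoeff_eq_zero {σ K : Type*} [Field K]
    {f : MvPowerSeries σ K} : f ∈ maximalIdeal (MvPowerSeries σ K) ↔ constantCoeff f = 0 := by
  rw [mem_maximalIdeal, mem_nonunits_iff, isUnit_iff_constantCoeff, isUnit_iff_ne_zero, not_not]

theorem mem_span_X_X_of_constantCoeff_eq_zero {R : Type*} [CommRing R]
    {f : MvPowerSeries (Fin 2) R} (hf : constantCoeff f = 0) : f ∈ Ideal.span {X 0, X 1} := by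
  classical
  let f₁ : MvPowerSeries (Fin 2) R := fun d => if d 0 = 0 then coeff d f else 0
  obtain ⟨p, hp⟩ : X 0 ∣ f - f₁ := X_dvd_iff.mpr fun d hd => by
    rw [map_sub, sub_eq_zero]
    exact (if_pos hd).symm
  obtain ⟨q, hq⟩ : X 1 ∣ f₁ := X_dvd_iff.mpr fun d hd => by
    show (if d 0 = 0 then coeff d f else 0) = 0
    split_ifs with h0
    · obtain rfl : d = 0 := by ext i; fin_cases i <;> assumption
      simpa using hf
    · rfl
  rw [← sub_add_cancel f f₁, hp, hq]
  exact Ideal.mem_span_pair.mpr ⟨p, q, by ring⟩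

variable {K : Type*} [Field K]

theorem maximalIdeal_eq_span_X_X :
    maximalIdeal (MvPowerSeries (Fin 2) K) = Ideal.span {X 0, X 1} := by
  refine le_antisymm (fun f hf => mem_span_X_X_of_constantCoeff_eq_zero
    (mem_maximalIdeal_iff_constantCoeff_eq_zero.mp hf)) ?_
  rw [Ideal.span_le]
  rintro _ (rfl | rfl) <;>
    exact mem_maximalIdeal_iff_constantCoeff_eq_zero.mpr (constantCoeff_X _)

instance isAdicComplete_maximalIdeal :
    IsAdicComplete (maximalIdeal (MvPowerSeries (Fin 2) K)) (MvPowerSeries (Fin 2) K) := by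
  have : Set.range (X : Fin 2 → MvPowerSeries (Fin 2) K) = {X 0, X 1} := by
    ext; simp [Fin.exists_fin_two, eq_comm]
  rw [maximalIdeal_eq_span_X_X, ← this]
  infer_instance

theorem exists_algEquiv_X_eq {a : Fin 2 → MvPowerSeries (Fin 2) K}
    (ha : ∀ i, a i - X i ∈ maximalIdeal (MvPowerSeries (Fin 2) K) ^ 2) :
    ∃ φ : MvPowerSeries (Fin 2) K ≃ₐ[K] MvPowerSeries (Fin 2) K, ∀ i, φ (X i) = a i := by
  have ha₀ : ∀ i, constantCoeff (a i) = 0 := fun i => by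
    rw [← mem_maximalIdeal_iff_constantCoeff_eq_zero, ← sub_add_cancel (a i) (X i)]
    exact add_mem (Ideal.pow_le_self two_ne_zero (ha i))
      (mem_maximalIdeal_iff_constantCoeff_eq_zero.mpr (constantCoeff_X i))
  have hsub : HasSubst a := hasSubst_of_constantCoeff_zero ha₀
  set φ := substAlgHom (R := K) hsub
  have hφX : ∀ i, φ (X i) = a i := substAlgHom_X _
  have h₀ : ∀ f, φ f - f ∈ maximalIdeal (MvPowerSeries (Fin 2) K) := fun f => by
    set f₀ := f - C (constantCoeff f)
    have hf₀ : constantCoeff f₀ = 0 := by simp [f₀]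
    rw [show φ f - f = φ f₀ - f₀ by simp [f₀, c_eq_algebraMap]]
    refine sub_mem (mem_maximalIdeal_iff_constantCoeff_eq_zero.mpr ?_)
      (mem_maximalIdeal_iff_constantCoeff_eq_zero.mpr hf₀)
    rw [coe_substAlgHom]
    exact constantCoeff_subst_eq_zero hsub ha₀ hf₀
  have hbij := bijective_of_sub_mem_pow_succ φ.toRingHom.toAddMonoidHom
    (sub_mem_pow_succ_of_span maximalIdeal_eq_span_X_X φ.toRingHom h₀ (by
      rintro _ (rfl | rfl) <;> simpa [hφX] using ha _))
  exact ⟨AlgEquiv.ofBijective φ hbij, hφX⟩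

end MvPowerSeries

theorem span_sq_add_cube_add_span_mul_span_sq {A : Type*} [CommRing A] (x y : A) :
    Ideal.span {x ^ 2 + y ^ 3} + Ideal.span {x, y} * Ideal.span {y ^ 2} =
      Ideal.span {x ^ 2, x * y ^ 2, y ^ 3} := by
  rw [Ideal.span_mul_span', Set.mul_singleton, Set.image_insert_eq, Set.image_singleton,
    Submodule.add_eq_sup, ← Ideal.span_union, Set.singleton_union]
  have hy : y * y ^ 2 = y ^ 3 := by ring
  refine le_antisymm (Ideal.span_le.mpr ?_) (Ideal.span_le.mpr ?_) <;>
    rintro _ (rfl | rfl | rfl) <;> simp only [SetLike.mem_coe, hy]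
  · exact add_mem (Ideal.subset_span (by simp)) (Ideal.subset_span (by simp))
  · exact Ideal.subset_span (by simp)
  · exact Ideal.subset_span (by simp)
  · rw [show x ^ 2 = x ^ 2 + y ^ 3 - y ^ 3 by ring]
    exact sub_mem (Ideal.subset_span (by simp)) (Ideal.subset_span (by simp))
  · exact Ideal.subset_span (by simp)
  · exact Ideal.subset_span (by simp)

section PartialDerivative

variable {K : Type*} [Field K]

theorem pderiv_eq_mvPowerSeries_pderiv {s : ℕ} (ν : Fin s) (f : MvPowerSeries (Fin s) K) :
    pderiv ν f = MvPowerSeries.pderiv K ν f := by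
  ext e
  show ((e ν + 1 : ℕ) : K) * _ = _
  rw [MvPowerSeries.coeff_pderiv, Nat.cast_succ, mul_comm]

variable [CharP K 2]

theorem pderiv_zero_sq_add_cube :
    pderiv 0 (X 0 ^ 2 + X 1 ^ 3 : MvPowerSeries (Fin 2) K) = 0 := by
  simp [pderiv_eq_mvPowerSeries_pderiv, CharTwo.ofNat_eq_mod]

theorem pderiv_one_sq_add_cube :
    pderiv 1 (X 0 ^ 2 + X 1 ^ 3 : MvPowerSeries (Fin 2) K) = X 1 ^ 2 := by
  simp [pderiv_eq_mvPowerSeries_pderiv, CharTwo.ofNat_eq_mod]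

end PartialDerivative

theorem example_char_two_contact_determinacy
    {K : Type*} [Field K] (hchar : ringChar K = 2) :
    (∀ g : MvPowerSeries (Fin 2) K,
      g - (MvPowerSeries.X 0 ^ 2 + MvPowerSeries.X 1 ^ 3) ∈
        (maximalIdeal (MvPowerSeries (Fin 2) K)) ^ 5 →
      ∃ (u : (MvPowerSeries (Fin 2) K)ˣ)
        (φ : MvPowerSeries (Fin 2) K ≃ₐ[K] MvPowerSeries (Fin 2) K),
        g = (u : MvPowerSeries (Fin 2) K) *
          φ (MvPowerSeries.X 0 ^ 2 + MvPowerSeries.X 1 ^ 3)) ∧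
    Ideal.span {(MvPowerSeries.X 0 ^ 2 + MvPowerSeries.X 1 ^ 3 : MvPowerSeries (Fin 2) K)} +
        (maximalIdeal (MvPowerSeries (Fin 2) K)) *
          Ideal.span {pderiv 0 (MvPowerSeries.X 0 ^ 2 + MvPowerSeries.X 1 ^ 3 :
              MvPowerSeries (Fin 2) K),
            pderiv 1 (MvPowerSeries.X 0 ^ 2 + MvPowerSeries.X 1 ^ 3 :
              MvPowerSeries (Fin 2) K)} =
      Ideal.span {(MvPowerSeries.X 0 ^ 2 : MvPowerSeries (Fin 2) K),
        MvPowerSeries.X 0 * MvPowerSeries.X 1 ^ 2, MvPowerSeries.X 1 ^ 3} := by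
  have : CharP K 2 := ringChar.eq_iff.mp hchar
  refine ⟨fun g hg => ?_, ?_⟩
  · obtain ⟨b, hb, u, rfl⟩ :=
      exists_eq_unit_mul_sq_add_cube maximalIdeal_eq_span_X_X CharTwo.two_eq_zero hg
    obtain ⟨φ, hφ⟩ := exists_algEquiv_X_eq (a := ![X 0, X 1 + b]) fun i => by
      fin_cases i <;> simp [hb]
    exact ⟨u, φ, by simp [hφ]⟩
  · rw [pderiv_zero_sq_add_cube, pderiv_one_sq_add_cube, Ideal.span_insert_zero,
      maximalIdeal_eq_span_X_X]
    exact span_sq_add_cube_add_span_mul_span_sq _ _
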